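/- Let g ∈ L²(ℝ), a > 0, E ⊆ [0,a] measurable, and A, B > 0. The following are equivalent: (1) A ≤ ⟨g,g⟩_a(t) ≤ B for almost every t ∈ E; (2) for every φ ∈ L²(E), A‖φ‖² ≤ ‖φ̃·g‖²_{L²(ℝ)} ≤ B‖φ‖², where φ̃ is the a-periodic extension of φ to ℝ. -/

import Mathlib

/-!
Because `φ` vanishes off `[0, a]`, for almost every `t` at most one of the translates
`φ (t - n a)` is nonzero, so `‖φ̃ g‖² = ∑ₙ ‖φ (· - n a)‖² ‖g‖²` a.e.; translating each term by
`n a` gives `∫ ‖φ̃ g‖² = ∫ ‖φ‖² ⟨g,g⟩_a`. Condition (2) therefore bounds the averages of the weight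
`⟨g,g⟩_a` against every `‖φ‖²` with `φ ∈ L²(E)`, and testing with indicators of subsets of `E`
shows that this is the same as `A ≤ ⟨g,g⟩_a ≤ B` a.e. on `E`.

The comparison is made in `ℝ≥0∞`, where `⟨g,g⟩_a` is always meaningful; `0 < A` excludes the
points where the real series diverges and `∑'` returns the junk value `0`.
-/

open MeasureTheory Set Filter
open scoped ENNReal

theorem enorm_tsum_sq_of_support_subsingleton {ι E : Type*} [NormedAddCommGroup E] {f : ι → E}
    (hf : (Function.support f).Subsingleton) : ‖∑' i, f i‖ₑ ^ 2 = ∑' i, ‖f i‖ₑ ^ 2 := by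
  rcases hf.eq_empty_or_singleton with h | ⟨i, h⟩
  · simp [Function.support_eq_empty_iff.1 h]
  · have hj : ∀ j, j ≠ i → f j = 0 := fun j hj => Function.notMem_support.1 (h ▸ hj)
    rw [tsum_eq_single i hj, tsum_eq_single i fun j hji => by simp [hj j hji]]

theorem ENNReal.toReal_mul_bounds_iff {A B : ℝ} (hA : 0 < A) {I L : ℝ≥0∞} (hI : I ≠ ∞)
    (hL : I = 0 → L = 0) :
    (A * I.toReal ≤ L.toReal ∧ L.toReal ≤ B * I.toReal) ↔
      (ENNReal.ofReal A * I ≤ L ∧ L ≤ ENNReal.ofReal B * I) := by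
  rcases eq_or_ne I 0 with rfl | hI0
  · simp [hL rfl]
  have hIpos : 0 < I.toReal := ENNReal.toReal_pos hI0 hI
  have hofReal : ∀ r : ℝ, ENNReal.ofReal r * I = ENNReal.ofReal (r * I.toReal) := fun r => by
    rw [ENNReal.ofReal_mul' ENNReal.toReal_nonneg, ENNReal.ofReal_toReal hI]
  simp only [hofReal]
  constructor
  · rintro ⟨hlo, hup⟩
    have hLtop : L ≠ ∞ := fun h => by
      rw [h, ENNReal.toReal_top] at hlo; nlinarith
    have hB : 0 ≤ B * I.toReal := by nlinarith
    exact ⟨(ENNReal.ofReal_le_iff_le_toReal hLtop).2 hlo,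
      (ENNReal.le_ofReal_iff_toReal_le hLtop hB).2 hup⟩
  · rintro ⟨hlo, hup⟩
    have hLtop : L ≠ ∞ := ne_top_of_le_ne_top ENNReal.ofReal_ne_top hup
    have hpos : 0 < ENNReal.ofReal (B * I.toReal) :=
      (ENNReal.ofReal_pos.2 (by positivity)).trans_le (hlo.trans hup)
    exact ⟨(ENNReal.ofReal_le_iff_le_toReal hLtop).1 hlo,
      ENNReal.toReal_le_of_le_ofReal (ENNReal.ofReal_pos.1 hpos).le hup⟩

section Measure

variable {α : Type*} [MeasurableSpace α] {μ : Measure α}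

theorem integral_norm_sq_eq_toReal_lintegral {E : Type*} [NormedAddCommGroup E] {f : α → E}
    (hf : AEStronglyMeasurable f μ) : ∫ x, ‖f x‖ ^ 2 ∂μ = (∫⁻ x, ‖f x‖ₑ ^ 2 ∂μ).toReal := by
  rw [← integral_toReal (hf.enorm.pow_const 2) (.of_forall fun _ => by finiteness)]
  simp [ENNReal.toReal_pow]

theorem MeasureTheory.MemLp.lintegral_enorm_sq_ne_top {E : Type*} [NormedAddCommGroup E]
    {f : α → E} (hf : MemLp f 2 μ) : ∫⁻ x, ‖f x‖ₑ ^ 2 ∂μ ≠ ∞ := by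
  simpa using
    (lintegral_rpow_enorm_lt_top_of_eLpNorm_lt_top two_ne_zero ENNReal.ofNat_ne_top hf.2).ne

theorem ae_bounds_of_forall_setLIntegral_bounds [SigmaFinite μ] {f : α → ℝ≥0∞}
    (hf : AEMeasurable f μ) {c d : ℝ≥0∞}
    (h : ∀ s, MeasurableSet s → μ s < ∞ →
      c * μ s ≤ ∫⁻ x in s, f x ∂μ ∧ ∫⁻ x in s, f x ∂μ ≤ d * μ s) :
    ∀ᵐ x ∂μ, c ≤ f x ∧ f x ≤ d := by
  have hc : (fun _ => c) ≤ᵐ[μ] f :=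
    ae_le_of_forall_setLIntegral_le_of_sigmaFinite₀ aemeasurable_const fun s hs hμs => by
      simpa [setLIntegral_const] using (h s hs hμs).1
  have hd : f ≤ᵐ[μ] fun _ => d :=
    ae_le_of_forall_setLIntegral_le_of_sigmaFinite₀ hf fun s hs hμs => by
      simpa [setLIntegral_const] using (h s hs hμs).2
  filter_upwards [hc, hd] with x using And.intro

theorem lintegral_mul_bounds_of_ae_bounds {w f : α → ℝ≥0∞} {c d : ℝ≥0∞} (hd : d ≠ ∞)
    (h : ∀ᵐ x ∂μ, w x ≠ 0 → c ≤ f x ∧ f x ≤ d) :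
    c * ∫⁻ x, w x ∂μ ≤ ∫⁻ x, w x * f x ∂μ ∧ ∫⁻ x, w x * f x ∂μ ≤ d * ∫⁻ x, w x ∂μ := by
  have hpt : ∀ᵐ x ∂μ, c * w x ≤ w x * f x ∧ w x * f x ≤ d * w x := by
    filter_upwards [h] with x hx
    by_cases hw : w x = 0
    · simp [hw]
    · rw [mul_comm c, mul_comm d]
      exact ⟨by gcongr; exact (hx hw).1, by gcongr; exact (hx hw).2⟩
  refine ⟨(lintegral_const_mul_le c w).trans (lintegral_mono_ae (hpt.mono fun _ hx => hx.1)), ?_⟩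
  rw [← lintegral_const_mul' d w hd]
  exact lintegral_mono_ae (hpt.mono fun _ hx => hx.2)

theorem ae_bounds_iff_forall_lintegral_weighted_bounds [SigmaFinite μ] {E : Set α}
    (hE : MeasurableSet E) {f : α → ℝ≥0∞} (hf : AEMeasurable f μ) {c d : ℝ≥0∞} (hd : d ≠ ∞) :
    (∀ᵐ x ∂μ, x ∈ E → c ≤ f x ∧ f x ≤ d) ↔
      ∀ φ : α → ℂ, MemLp φ 2 μ → (∀ x ∉ E, φ x = 0) →
        c * ∫⁻ x, ‖φ x‖ₑ ^ 2 ∂μ ≤ ∫⁻ x, ‖φ x‖ₑ ^ 2 * f x ∂μ ∧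
          ∫⁻ x, ‖φ x‖ₑ ^ 2 * f x ∂μ ≤ d * ∫⁻ x, ‖φ x‖ₑ ^ 2 ∂μ := by
  constructor
  · intro h φ _ hφE
    refine lintegral_mul_bounds_of_ae_bounds hd ?_
    filter_upwards [h] with x hx hφx
    exact hx (by_contra fun hxE => by simp [hφE x hxE] at hφx)
  · intro h
    rw [← ae_restrict_iff' hE]
    refine ae_bounds_of_forall_setLIntegral_bounds hf.restrict fun s hs hμs => ?_
    rw [Measure.restrict_apply hs] at hμs ⊢
    rw [Measure.restrict_restrict hs]
    have hsE := hs.inter hE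
    have hsq : ∀ x, ‖(s ∩ E).indicator (fun _ => (1 : ℂ)) x‖ₑ ^ 2 = (s ∩ E).indicator 1 x :=
      fun x => by by_cases hx : x ∈ s ∩ E <;> simp [hx]
    have hmul : ∀ x, ‖(s ∩ E).indicator (fun _ => (1 : ℂ)) x‖ₑ ^ 2 * f x = (s ∩ E).indicator f x :=
      fun x => by by_cases hx : x ∈ s ∩ E <;> simp [hx]
    have := h _ (memLp_indicator_const 2 hsE 1 (.inr hμs.ne)) fun x hx =>
      indicator_of_notMem (fun hx' => hx hx'.2) _
    simp only [hmul, lintegral_indicator hsE] at this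
    simpa only [hsq, lintegral_indicator_one hsE] using this

end Measure

section Translation

variable {G F : Type*} [MeasurableSpace G] [AddGroup G] [MeasurableAdd G] [MeasurableSpace F]
  {μ : Measure G} [μ.IsAddRightInvariant] {f : G → F}

theorem AEMeasurable.comp_add_right (hf : AEMeasurable f μ) (c : G) :
    AEMeasurable (fun x => f (x + c)) μ :=
  hf.comp_quasiMeasurePreserving (measurePreserving_add_right μ c).quasiMeasurePreserving

theorem AEMeasurable.comp_sub_right (hf : AEMeasurable f μ) (c : G) :
    AEMeasurable (fun x => f (x - c)) μ := by
  simpa only [sub_eq_add_neg] using hf.comp_add_right (-c)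

end Translation

noncomputable def periodizedNormSq (g : ℝ → ℂ) (a t : ℝ) : ℝ≥0∞ :=
  ∑' n : ℤ, ‖g (t - n * a)‖ₑ ^ 2

theorem tsum_norm_sq_eq_toReal_periodizedNormSq (g : ℝ → ℂ) (a t : ℝ) :
    ∑' n : ℤ, ‖g (t - n * a)‖ ^ 2 = (periodizedNormSq g a t).toReal := by
  rw [periodizedNormSq, ENNReal.tsum_toReal_eq fun _ => by finiteness]
  simp [ENNReal.toReal_pow]

theorem aemeasurable_periodizedNormSq {g : ℝ → ℂ} (hg : AEMeasurable g) (a : ℝ) :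
    AEMeasurable (periodizedNormSq g a) :=
  AEMeasurable.tsum fun _ => (hg.comp_sub_right _).enorm.pow_const 2

theorem tsum_norm_sq_bounds_iff {g : ℝ → ℂ} {a A B : ℝ} (hA : 0 < A) (t : ℝ) :
    (A ≤ ∑' n : ℤ, ‖g (t - n * a)‖ ^ 2 ∧ ∑' n : ℤ, ‖g (t - n * a)‖ ^ 2 ≤ B) ↔
      (ENNReal.ofReal A ≤ periodizedNormSq g a t ∧ periodizedNormSq g a t ≤ ENNReal.ofReal B) := by
  simpa [tsum_norm_sq_eq_toReal_periodizedNormSq] using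
    ENNReal.toReal_mul_bounds_iff (B := B) (L := periodizedNormSq g a t) hA ENNReal.one_ne_top
      (by simp)

theorem eq_floor_of_sub_mem_Icc {a t : ℝ} (ha : 0 < a) (ht : t ∉ range fun n : ℤ => n * a)
    {n : ℤ} (hn : t - n * a ∈ Icc 0 a) : n = ⌊t / a⌋ := by
  have h1 : t ≠ (n + 1 : ℤ) * a := fun h => ht ⟨n + 1, h.symm⟩
  push_cast at h1
  rw [eq_comm, Int.floor_eq_iff, le_div_iff₀ ha, div_lt_iff₀ ha]
  constructor
  · linarith [hn.1]
  · exact lt_of_le_of_ne (by linarith [hn.2]) (by intro h; apply h1; linarith)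

theorem ae_support_translates_subsingleton {a : ℝ} (ha : 0 < a) {φ : ℝ → ℂ}
    (hφ : ∀ t ∉ Icc 0 a, φ t = 0) :
    ∀ᵐ t, (Function.support fun n : ℤ => φ (t - n * a)).Subsingleton := by
  filter_upwards [(countable_range fun n : ℤ => n * a).ae_notMem volume] with t ht
  have hmem : ∀ k : ℤ, φ (t - k * a) ≠ 0 → t - k * a ∈ Icc 0 a := fun k hk => by
    by_contra h; exact hk (hφ _ h)
  intro m hm n hn
  rw [eq_floor_of_sub_mem_Icc ha ht (hmem m hm), eq_floor_of_sub_mem_Icc ha ht (hmem n hn)]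

theorem lintegral_enorm_periodize_mul_sq {a : ℝ} {φ g : ℝ → ℂ} (hφ : AEMeasurable φ)
    (hg : AEMeasurable g)
    (hsupp : ∀ᵐ t, (Function.support fun n : ℤ => φ (t - n * a)).Subsingleton) :
    ∫⁻ t, ‖(∑' n : ℤ, φ (t - n * a)) * g t‖ₑ ^ 2 = ∫⁻ t, ‖φ t‖ₑ ^ 2 * periodizedNormSq g a t := by
  calc ∫⁻ t, ‖(∑' n : ℤ, φ (t - n * a)) * g t‖ₑ ^ 2
      = ∫⁻ t, ∑' n : ℤ, ‖φ (t + n * a)‖ₑ ^ 2 * ‖g t‖ₑ ^ 2 := by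
        refine lintegral_congr_ae ?_
        filter_upwards [hsupp] with t ht
        rw [enorm_mul, mul_pow, enorm_tsum_sq_of_support_subsingleton ht, ENNReal.tsum_mul_right,
          ← (Equiv.neg ℤ).tsum_eq]
        simp [sub_eq_add_neg]
    _ = ∑' n : ℤ, ∫⁻ s, ‖φ s‖ₑ ^ 2 * ‖g (s - n * a)‖ₑ ^ 2 := by
        rw [lintegral_tsum fun n => by have := hφ.comp_add_right (n * a); fun_prop]
        refine tsum_congr fun n => ?_
        rw [← lintegral_add_right_eq_self (fun s => ‖φ s‖ₑ ^ 2 * ‖g (s - n * a)‖ₑ ^ 2) (n * a)]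
        simp only [add_sub_cancel_right]
    _ = ∫⁻ t, ‖φ t‖ₑ ^ 2 * periodizedNormSq g a t := by
        rw [← lintegral_tsum (f := fun (n : ℤ) s => ‖φ s‖ₑ ^ 2 * ‖g (s - n * a)‖ₑ ^ 2) fun n =>
          (hφ.enorm.pow_const 2).mul ((hg.comp_sub_right (n * a)).enorm.pow_const 2)]
        simp only [periodizedNormSq, ENNReal.tsum_mul_left]

theorem integral_norm_sq_periodize_mul_bounds_iff {a A B : ℝ} (ha : 0 < a) (hA : 0 < A)
    {φ g : ℝ → ℂ} (hφ : MemLp φ 2 volume) (hφ0 : ∀ t ∉ Icc 0 a, φ t = 0) (hg : AEMeasurable g) :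
    (A * ∫ t, ‖φ t‖ ^ 2 ≤ ∫ t, ‖(∑' n : ℤ, φ (t - n * a)) * g t‖ ^ 2 ∧
        ∫ t, ‖(∑' n : ℤ, φ (t - n * a)) * g t‖ ^ 2 ≤ B * ∫ t, ‖φ t‖ ^ 2) ↔
      (ENNReal.ofReal A * ∫⁻ t, ‖φ t‖ₑ ^ 2 ≤ ∫⁻ t, ‖φ t‖ₑ ^ 2 * periodizedNormSq g a t ∧
        ∫⁻ t, ‖φ t‖ₑ ^ 2 * periodizedNormSq g a t ≤ ENNReal.ofReal B * ∫⁻ t, ‖φ t‖ₑ ^ 2) := by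
  have hφm := hφ.aestronglyMeasurable.aemeasurable
  have hprod : AEMeasurable fun t => (∑' n : ℤ, φ (t - n * a)) * g t :=
    (AEMeasurable.tsum (f := fun (n : ℤ) t => φ (t - n * a)) fun n =>
      hφm.comp_sub_right (n * a)).mul hg
  rw [integral_norm_sq_eq_toReal_lintegral hφ.aestronglyMeasurable,
    integral_norm_sq_eq_toReal_lintegral hprod.aestronglyMeasurable,
    lintegral_enorm_periodize_mul_sq hφm hg (ae_support_translates_subsingleton ha hφ0)]
  refine ENNReal.toReal_mul_bounds_iff hA hφ.lintegral_enorm_sq_ne_top fun h0 => ?_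
  rw [lintegral_eq_zero_iff' (hφm.enorm.pow_const 2)] at h0
  refine (lintegral_congr_ae (g := 0) ?_).trans lintegral_zero
  filter_upwards [h0] with t ht
  simp_all

theorem stmt16_general (a : ℝ) (ha : 0 < a) (E : Set ℝ) (hE : MeasurableSet E)
    (hEsub : E ⊆ Set.Icc 0 a) (g : ℝ → ℂ)
    (hg : MemLp g 2 (volume : Measure ℝ)) (A B : ℝ) (hA : 0 < A) :
    (∀ᵐ t : ℝ ∂volume, t ∈ E →
        A ≤ (∑' n : ℤ, ‖g (t - n * a)‖ ^ 2) ∧ (∑' n : ℤ, ‖g (t - n * a)‖ ^ 2) ≤ B) ↔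
      ∀ φ : ℝ → ℂ, MemLp φ 2 (volume : Measure ℝ) → (∀ t : ℝ, t ∉ E → φ t = 0) →
        A * (∫ t : ℝ, ‖φ t‖ ^ 2) ≤
            (∫ t : ℝ, ‖(∑' n : ℤ, φ (t - n * a)) * g t‖ ^ 2) ∧
          (∫ t : ℝ, ‖(∑' n : ℤ, φ (t - n * a)) * g t‖ ^ 2) ≤
            B * ∫ t : ℝ, ‖φ t‖ ^ 2 := by
  have hgm := hg.aestronglyMeasurable.aemeasurable
  simp_rw [tsum_norm_sq_bounds_iff hA, ae_bounds_iff_forall_lintegral_weighted_bounds hE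
    (aemeasurable_periodizedNormSq hgm a) ENNReal.ofReal_ne_top]
  refine forall_congr' fun φ => forall_congr' fun hφ => forall_congr' fun hφE => ?_
  exact (integral_norm_sq_periodize_mul_bounds_iff ha hA hφ
    (fun t ht => hφE t fun htE => ht (hEsub htE)) hgm).symm

/-- For E ⊆ [0,a]: `A ≤ ⟨g,g⟩_a ≤ B` a.e. on E iff for every φ ∈ L²(E),
`A‖φ‖² ≤ ‖φ̃·g‖² ≤ B‖φ‖²`, where `φ̃(t) = ∑_{n∈ℤ} φ(t − na)` is the a-periodic
extension of φ. -/
theorem stmt16 (a : ℝ) (ha : 0 < a) (E : Set ℝ) (hE : MeasurableSet E)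
    (hEsub : E ⊆ Set.Icc 0 a) (g : ℝ → ℂ)
    (hg : MemLp g 2 (volume : Measure ℝ)) (A B : ℝ) (hA : 0 < A) (hB : 0 < B) :
    (∀ᵐ t : ℝ ∂volume, t ∈ E →
        A ≤ (∑' n : ℤ, ‖g (t - n * a)‖ ^ 2) ∧ (∑' n : ℤ, ‖g (t - n * a)‖ ^ 2) ≤ B) ↔
      ∀ φ : ℝ → ℂ, MemLp φ 2 (volume : Measure ℝ) → (∀ t : ℝ, t ∉ E → φ t = 0) →
        A * (∫ t : ℝ, ‖φ t‖ ^ 2) ≤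
            (∫ t : ℝ, ‖(∑' n : ℤ, φ (t - n * a)) * g t‖ ^ 2) ∧
          (∫ t : ℝ, ‖(∑' n : ℤ, φ (t - n * a)) * g t‖ ^ 2) ≤
            B * ∫ t : ℝ, ‖φ t‖ ^ 2 :=
  stmt16_general a ha E hE hEsub g hg A B hA
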